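/- arXiv:2510.02921 — 2 statements merged into one kernel-verified Lean document; each statement's English description precedes it below -/
import Mathlib

section
/- Let (𝕋^d,𝔅,μ,T) and (𝕋^d,𝔅,μ,S) be measure-preserving systems with the same invariant measure μ ≪ ℒ^d, both satisfying the Lusin–Lipschitz assumption d(F(x),F(y)) ≤ e^{g_F(x)+g_F(y)} d(x,y) with g_F ∈ L^p(μ). Then T∘S is μ-a.e. approximately differentiable and the chain rule ap∇(T∘S)(x) = ap∇T(S(x)) · ap∇S(x) holds for μ-a.e. x. -/
open MeasureTheory Filter
open scoped ENNReal

noncomputable section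

instance : Fact ((0:ℝ) < 1) := ⟨one_pos⟩

/-- The `d`-dimensional torus. -/
abbrev Torus (d : ℕ) := Fin d → AddCircle (1 : ℝ)

/-- The representative of a point of the circle in `(-1/2, 1/2]`-style lift. -/
def tlift (x : AddCircle (1 : ℝ)) : ℝ :=
  let r : ℝ := (AddCircle.equivIco 1 0 x : ℝ)
  if r ≤ 1 / 2 then r else r - 1

/-- Lift of a torus point (e.g. of a small difference of torus points) to `ℝ^d`. -/
def vlift {d : ℕ} (x : Torus d) : EuclideanSpace ℝ (Fin d) := WithLp.toLp 2 (fun i => tlift (x i))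

/-- A measurable set has density one at `x`. -/
def DensityOneAt {d : ℕ} (E : Set (Torus d)) (x : Torus d) : Prop :=
  Tendsto (fun r : ℝ => volume (E ∩ Metric.ball x r) / volume (Metric.ball x r))
    (nhdsWithin 0 (Set.Ioi 0)) (nhds 1)

/-- `T` is approximately differentiable at `x` with approximate differential `A`:
the approximate limit of `|T(y) - T(x) - A(y-x)|/|y-x|` as `y → x` is `0`. -/
def ApproxDerivAt {d : ℕ} (T : Torus d → Torus d) (x : Torus d)
    (A : EuclideanSpace ℝ (Fin d) →L[ℝ] EuclideanSpace ℝ (Fin d)) : Prop :=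
  ∃ E : Set (Torus d), MeasurableSet E ∧ DensityOneAt E x ∧
    Tendsto (fun y => ‖vlift (T y - T x) - A (vlift (y - x))‖ / ‖vlift (y - x)‖)
      (nhdsWithin x (E \ {x})) (nhds 0)

/-!
Where `g ≤ N`, the Lusin–Lipschitz bound makes a map `e^{2N}`-Lipschitz. In a local chart,
Rademacher's theorem then differentiates it relative to `{g ≤ N}` at almost every point of that
set, and Lebesgue's density theorem gives the set density one there. For `T ∘ S` one
differentiates along `E = F_S ∩ S⁻¹ F_T`, with `F_S`, `F_T` such pieces for `S` and `T`; the
chain rule along `E` is elementary because `S` is Lipschitz on `E`. The hypotheses on `μ` show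
that `E` still has density one at `μ`-a.e. `x`. Indeed `S` maps the points of `F_S \ S⁻¹ F_T`
within `r` of `x` into `F_Tᶜ ∩ B(S x, K r)`, whose `μ`-measure is `o(r^d)` for a typical `S x`.
Since `S` preserves `μ`, the set `F_S \ S⁻¹ F_T` has `μ`-density zero at `x`, and at points where
`dμ/dℒ` is bounded below outside a set of density zero this is Lebesgue density zero.
-/

open Metric Set Topology
open scoped NNReal

lemma measure_le_measure_rnDeriv_lt_add {α : Type*} [MeasurableSpace α] (μ ν : Measure α)
    {c : ℝ≥0} (hc : c ≠ 0) (s : Set α) :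
    ν s ≤ ν ({x | μ.rnDeriv ν x < c} ∩ s) + (c : ℝ≥0∞)⁻¹ * μ s := by
  have hmeas : MeasurableSet {x | (c : ℝ≥0∞) ≤ μ.rnDeriv ν x} :=
    measurableSet_le measurable_const (Measure.measurable_rnDeriv μ ν)
  have hmarkov : (c : ℝ≥0∞) * ν ({x | (c : ℝ≥0∞) ≤ μ.rnDeriv ν x} ∩ s) ≤ μ s := by
    rw [← Measure.restrict_apply hmeas]
    exact (mul_meas_ge_le_lintegral₀ (Measure.measurable_rnDeriv μ ν).aemeasurable _).trans
      (Measure.setLIntegral_rnDeriv_le s)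
  calc ν s ≤ ν ({x | μ.rnDeriv ν x < c} ∩ s) + ν ({x | (c : ℝ≥0∞) ≤ μ.rnDeriv ν x} ∩ s) := by
        refine (measure_mono fun x hx => ?_).trans (measure_union_le _ _)
        exact (lt_or_ge (μ.rnDeriv ν x) c).imp (⟨·, hx⟩) (⟨·, hx⟩)
    _ ≤ _ := by
        gcongr
        rw [← ENNReal.div_eq_inv_mul,
          ENNReal.le_div_iff_mul_le (.inl (by simpa)) (.inl ENNReal.coe_ne_top), mul_comm]
        exact hmarkov

lemma exists_lipschitzOnWith_cover {α β : Type*} [PseudoMetricSpace α] [MeasurableSpace α]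
    [PseudoMetricSpace β] {μ : Measure α} {f : α → β} {g : α → ℝ} (hg : AEMeasurable g μ)
    (hf : ∀ x y, dist (f x) (f y) ≤ Real.exp (g x + g y) * dist x y) :
    ∃ F : ℕ → Set α, (∀ N, MeasurableSet (F N)) ∧
      (∀ N : ℕ, LipschitzOnWith (Real.exp (2 * N)).toNNReal f (F N)) ∧
      ∀ᵐ x ∂μ, ∃ N, x ∈ F N := by
  set Z := toMeasurable μ {x | g x ≠ hg.mk g x}
  have hZ : μ Z = 0 := by rw [measure_toMeasurable]; exact ae_iff.1 hg.ae_eq_mk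
  have hgZ : ∀ x ∉ Z, g x = hg.mk g x := fun x hx =>
    by_contra fun h => hx (subset_toMeasurable _ _ h)
  refine ⟨fun N => {x | hg.mk g x ≤ N} \ Z, fun N => (measurableSet_le hg.measurable_mk
    measurable_const).diff (measurableSet_toMeasurable _ _), fun N => ?_, ?_⟩
  · refine LipschitzOnWith.of_dist_le' fun x ⟨hxN, hxZ⟩ y ⟨hyN, hyZ⟩ => (hf x y).trans ?_
    gcongr
    rw [hgZ x hxZ, hgZ y hyZ]
    linarith [show hg.mk g x ≤ N from hxN, show hg.mk g y ≤ N from hyN]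
  · filter_upwards [measure_eq_zero_iff_ae_notMem.1 hZ] with x hx
    exact ⟨⌈hg.mk g x⌉₊, Nat.le_ceil (hg.mk g x), hx⟩

lemma tlift_mem_Ioc (z : AddCircle (1 : ℝ)) : tlift z ∈ Ioc (-(1 / 2) : ℝ) (1 / 2) := by
  have h := (AddCircle.equivIco (1 : ℝ) 0 z).2
  simp only [mem_Ico, zero_add] at h
  dsimp only [tlift]
  split_ifs with hr
  · exact ⟨by linarith, hr⟩
  · exact ⟨by linarith, by linarith⟩

lemma coe_tlift (z : AddCircle (1 : ℝ)) : ((tlift z : ℝ) : AddCircle (1 : ℝ)) = z := by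
  have h : ((AddCircle.equivIco (1 : ℝ) 0 z : ℝ) : AddCircle (1 : ℝ)) = z :=
    AddCircle.coe_equivIco
  dsimp only [tlift]
  split_ifs
  · exact h
  · rw [AddCircle.coe_sub, h, AddCircle.coe_period, sub_zero]

lemma tlift_eq_equivIoc (z : AddCircle (1 : ℝ)) :
    tlift z = (AddCircle.equivIoc 1 (-(1 / 2)) z : ℝ) := by
  have hmem : tlift z ∈ Ioc (-(1 / 2) : ℝ) (-(1 / 2) + 1) := by
    convert tlift_mem_Ioc z using 2; norm_num
  conv_rhs => rw [← coe_tlift z, AddCircle.equivIoc_coe_eq hmem]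

lemma tlift_coe {s : ℝ} (hs : s ∈ Ioc (-(1 / 2) : ℝ) (1 / 2)) :
    tlift (s : AddCircle (1 : ℝ)) = s := by
  have hs' : s ∈ Ioc (-(1 / 2) : ℝ) (-(1 / 2) + 1) := by convert hs using 2; norm_num
  rw [tlift_eq_equivIoc, AddCircle.equivIoc_coe_eq hs']

lemma tlift_zero : tlift 0 = 0 := by
  simpa using tlift_coe (s := 0) (by norm_num)

lemma norm_eq_abs_tlift (z : AddCircle (1 : ℝ)) : ‖z‖ = |tlift z| := by
  conv_lhs => rw [← coe_tlift z]
  refine (AddCircle.norm_coe_eq_abs_iff _ one_ne_zero).2 ?_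
  have h := tlift_mem_Ioc z
  rw [abs_le]; constructor <;> linarith [h.1, h.2]

lemma tlift_sub {a b : AddCircle (1 : ℝ)} (ha : ‖a‖ < 1 / 4) (hb : ‖b‖ < 1 / 4) :
    tlift (a - b) = tlift a - tlift b := by
  rw [norm_eq_abs_tlift, abs_lt] at ha hb
  rw [← tlift_coe (s := tlift a - tlift b) ⟨by linarith, by linarith⟩, AddCircle.coe_sub,
    coe_tlift, coe_tlift]

lemma measurePreserving_tlift :
    MeasurePreserving tlift volume (volume.restrict (Ioc (-(1 / 2) : ℝ) (1 / 2))) := by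
  have h := (measurePreserving_subtype_coe measurableSet_Ioc).comp
    (AddCircle.measurePreserving_equivIoc 1 (a := -(1 / 2)))
  convert h using 1
  · exact funext tlift_eq_equivIoc
  · norm_num

section Torus

variable {d : ℕ}

def toTorus (v : EuclideanSpace ℝ (Fin d)) : Torus d := fun i => (v i : AddCircle (1 : ℝ))

lemma toTorus_vlift (x : Torus d) : toTorus (vlift x) = x := funext fun i => coe_tlift (x i)

lemma vlift_zero : vlift (0 : Torus d) = 0 := by
  ext i; exact tlift_zero

lemma vlift_sub {x y : Torus d} (hx : ‖x‖ < 1 / 4) (hy : ‖y‖ < 1 / 4) :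
    vlift (x - y) = vlift x - vlift y := by
  ext i
  exact tlift_sub ((norm_le_pi_norm x i).trans_lt hx) ((norm_le_pi_norm y i).trans_lt hy)

lemma norm_le_norm_vlift (x : Torus d) : ‖x‖ ≤ ‖vlift x‖ := by
  refine (pi_norm_le_iff_of_nonneg (norm_nonneg _)).2 fun i => ?_
  rw [norm_eq_abs_tlift]
  exact PiLp.norm_apply_le (vlift x) i

lemma norm_vlift_le (x : Torus d) : ‖vlift x‖ ≤ √d * ‖x‖ := by
  rw [EuclideanSpace.norm_eq, ← Real.sqrt_sq (norm_nonneg x), ← Real.sqrt_mul (Nat.cast_nonneg d)]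
  refine Real.sqrt_le_sqrt ?_
  calc ∑ i, ‖vlift x i‖ ^ 2 ≤ ∑ _i : Fin d, ‖x‖ ^ 2 := by
        gcongr with i
        exact (norm_eq_abs_tlift (x i)).symm.trans_le (norm_le_pi_norm x i)
    _ = d * ‖x‖ ^ 2 := by simp

lemma norm_vlift_pos {x : Torus d} (hx : x ≠ 0) : 0 < ‖vlift x‖ :=
  (norm_pos_iff.2 hx).trans_le (norm_le_norm_vlift x)

lemma quasiMeasurePreserving_vlift :
    Measure.QuasiMeasurePreserving (vlift : Torus d → EuclideanSpace ℝ (Fin d)) volume volume := by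
  have hpi := measurePreserving_pi (fun _ : Fin d => (volume : Measure (AddCircle (1 : ℝ))))
    (fun _ => volume.restrict (Ioc (-(1 / 2) : ℝ) (1 / 2))) fun _ => measurePreserving_tlift
  rw [← Measure.restrict_pi_pi] at hpi
  exact (PiLp.volume_preserving_toLp (Fin d)).quasiMeasurePreserving.comp
    (hpi.quasiMeasurePreserving.mono_right Measure.restrict_le_self.absolutelyContinuous)

lemma closedBall_ae_eq_ball_torus (x : Torus d) {r : ℝ} (hr : 0 < r) :
    closedBall x r =ᵐ[volume] ball x r := by
  rw [closedBall_pi x hr.le, ball_pi x hr]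
  exact Measure.ae_eq_set_pi fun _ _ => AddCircle.closedBall_ae_eq_ball

lemma volume_ball_torus (x : Torus d) {r : ℝ} (hr : 0 < r) :
    volume (ball x r) = ENNReal.ofReal (min 1 (2 * r)) ^ d := by
  rw [← measure_congr (closedBall_ae_eq_ball_torus x hr), closedBall_pi x hr.le, volume_pi_pi]
  simp [AddCircle.volume_closedBall]

lemma volume_ball_mul_le (x y : Torus d) {K r : ℝ} (hK : 1 ≤ K) (hr : 0 < r) :
    volume (ball y (K * r)) ≤ ENNReal.ofReal K ^ d * volume (ball x r) := by
  rw [volume_ball_torus y (by positivity), volume_ball_torus x hr, ← mul_pow,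
    ← ENNReal.ofReal_mul (by linarith)]
  gcongr
  rw [mul_min_of_nonneg _ _ (by linarith)]
  exact min_le_min (by linarith) (by linarith)

def DensityZeroAt (ν : Measure (Torus d)) (s : Set (Torus d)) (x : Torus d) : Prop :=
  Tendsto (fun r : ℝ => ν (s ∩ ball x r) / volume (ball x r)) (𝓝[>] 0) (𝓝 0)

namespace DensityZeroAt

variable {ν : Measure (Torus d)} {s t : Set (Torus d)} {x : Torus d}

lemma mono (h : DensityZeroAt ν t x) (hst : s ⊆ t) : DensityZeroAt ν s x :=
  tendsto_of_tendsto_of_tendsto_of_le_of_le tendsto_const_nhds h (fun _ => zero_le)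
    fun _ => ENNReal.div_le_div_right (measure_mono (inter_subset_inter_left _ hst)) _

lemma union (hs : DensityZeroAt ν s x) (ht : DensityZeroAt ν t x) :
    DensityZeroAt ν (s ∪ t) x := by
  refine tendsto_of_tendsto_of_tendsto_of_le_of_le tendsto_const_nhds
    (by simpa using hs.add ht) (fun _ => zero_le) fun r => ?_
  rw [← ENNReal.add_div, union_inter_distrib_right]
  exact ENNReal.div_le_div_right (measure_union_le _ _) _

lemma inter_preimage {μ : Measure (Torus d)} {S : Torus d → Torus d}
    (hS : MeasurePreserving S μ μ) (ht : MeasurableSet t) {K : ℝ≥0} (hx : x ∈ s)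
    (hSs : LipschitzOnWith K S s) (h : DensityZeroAt μ t (S x)) :
    DensityZeroAt μ (s ∩ S ⁻¹' t) x := by
  set K' : ℝ := max 1 K
  have hK' : 1 ≤ K' := le_max_left _ _
  have hscale : Tendsto (fun r : ℝ => K' * r) (𝓝[>] 0) (𝓝[>] 0) :=
    tendsto_iff_comap.2 (comap_mulLeft_nhdsGT_zero (zero_lt_one.trans_le hK')).ge
  have hlim := ENNReal.Tendsto.const_mul (h.comp hscale)
    (.inr (ENNReal.pow_ne_top ENNReal.ofReal_ne_top) : _ ∨ ENNReal.ofReal K' ^ d ≠ ⊤)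
  rw [mul_zero] at hlim
  refine tendsto_of_tendsto_of_tendsto_of_le_of_le' tendsto_const_nhds hlim
    (Eventually.of_forall fun _ => zero_le) ?_
  filter_upwards [self_mem_nhdsWithin] with r (hr : 0 < r)
  have hpre : μ ((s ∩ S ⁻¹' t) ∩ ball x r) ≤ μ (t ∩ ball (S x) (K' * r)) := by
    rw [← hS.measure_preimage (ht.inter measurableSet_ball).nullMeasurableSet]
    refine measure_mono fun y ⟨⟨hys, hyt⟩, hyr⟩ => ⟨hyt, ?_⟩
    calc dist (S y) (S x) ≤ K * dist y x := hSs.dist_le_mul y hys x hx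
      _ ≤ K' * dist y x := by gcongr; exact le_max_right _ _
      _ < K' * r := by gcongr; exact hyr
  have hball := volume_ball_mul_le x (S x) hK' hr
  have hball₀ : volume (ball (S x) (K' * r)) ≠ 0 :=
    (measure_ball_pos volume _ (by positivity)).ne'
  refine ENNReal.div_le_of_le_mul ?_
  calc μ ((s ∩ S ⁻¹' t) ∩ ball x r)
      ≤ μ (t ∩ ball (S x) (K' * r)) / volume (ball (S x) (K' * r))
        * volume (ball (S x) (K' * r)) := by
        rwa [ENNReal.div_mul_cancel hball₀ (measure_ne_top _ _)]
    _ ≤ μ (t ∩ ball (S x) (K' * r)) / volume (ball (S x) (K' * r))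
        * (ENNReal.ofReal K' ^ d * volume (ball x r)) := by gcongr
    _ = _ := by simp only [Function.comp_apply]; ring

lemma of_measure {μ : Measure (Torus d)} {c : ℝ≥0} (hc : c ≠ 0) (h : DensityZeroAt μ s x)
    (hρ : DensityZeroAt volume {y | μ.rnDeriv volume y < c} x) : DensityZeroAt volume s x := by
  have hlim := hρ.add
    (ENNReal.Tendsto.const_mul h (.inr (ENNReal.inv_ne_top.2 (ENNReal.coe_ne_zero.2 hc))))
  rw [mul_zero, add_zero] at hlim
  refine tendsto_of_tendsto_of_tendsto_of_le_of_le tendsto_const_nhds hlim (fun _ => zero_le)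
    fun r => ?_
  dsimp only
  rw [← mul_div_assoc, ENNReal.div_add_div_same]
  gcongr ?_ / _
  refine (measure_le_measure_rnDeriv_lt_add μ volume hc _).trans ?_
  gcongr
  exact inter_subset_right

end DensityZeroAt

lemma ae_densityZeroAt (ν : Measure (Torus d)) [IsFiniteMeasure ν] {s : Set (Torus d)}
    (hs : MeasurableSet s) : ∀ᵐ x, x ∉ s → DensityZeroAt ν s x := by
  let v := IsUnifLocDoublingMeasure.vitaliFamily (volume : Measure (Torus d)) 1
  filter_upwards [v.ae_tendsto_rnDeriv (ν.restrict s), Measure.rnDeriv_restrict ν volume hs]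
    with x hx hρx hxs
  rw [hρx, indicator_of_notMem hxs] at hx
  have hballs : Tendsto (fun r => closedBall x r) (𝓝[>] 0) (v.filterAt x) :=
    IsUnifLocDoublingMeasure.tendsto_closedBall_filterAt _ _ _ tendsto_id
      (eventually_mem_nhdsWithin.mono fun r hr => by simpa using (mem_Ioi.1 hr).le)
  refine tendsto_of_tendsto_of_tendsto_of_le_of_le' tendsto_const_nhds (hx.comp hballs)
    (Eventually.of_forall fun _ => zero_le) ?_
  filter_upwards [self_mem_nhdsWithin] with r hr
  rw [Function.comp_apply, Measure.restrict_apply measurableSet_closedBall,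
    measure_congr (closedBall_ae_eq_ball_torus x hr)]
  gcongr ν ?_ / _
  exact fun y hy => ⟨ball_subset_closedBall hy.2, hy.1⟩

lemma densityOneAt_of_densityZeroAt_compl {s : Set (Torus d)} {x : Torus d}
    (hs : MeasurableSet s) (h : DensityZeroAt volume sᶜ x) : DensityOneAt s x := by
  have hsub : Tendsto (fun r => 1 - volume (sᶜ ∩ ball x r) / volume (ball x r)) (𝓝[>] 0)
      (𝓝 (1 - 0)) := ENNReal.Tendsto.sub tendsto_const_nhds h (Or.inl ENNReal.one_ne_top)
  rw [tsub_zero] at hsub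
  refine hsub.congr' ?_
  filter_upwards [self_mem_nhdsWithin] with r hr
  have hball₀ : volume (ball x r) ≠ 0 := (measure_ball_pos volume x hr).ne'
  have hsum : volume (s ∩ ball x r) / volume (ball x r)
      + volume (sᶜ ∩ ball x r) / volume (ball x r) = 1 := by
    rw [ENNReal.div_add_div_same, inter_comm s, inter_comm sᶜ, ← sdiff_eq,
      measure_inter_add_sdiff _ hs, ENNReal.div_self hball₀ (measure_ne_top _ _)]
  refine (ENNReal.eq_sub_of_add_eq ?_ hsum).symm
  exact ne_top_of_le_ne_top ENNReal.one_ne_top (hsum ▸ le_add_self)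

lemma ae_exists_densityZeroAt_rnDeriv_lt {μ : Measure (Torus d)} [IsFiniteMeasure μ]
    (hac : μ ≪ volume) :
    ∀ᵐ x ∂μ, ∃ c : ℝ≥0, c ≠ 0 ∧ DensityZeroAt volume {y | μ.rnDeriv volume y < c} x := by
  have hdens : ∀ᵐ x ∂μ, ∀ q : ℚ, ((q : ℝ).toNNReal : ℝ≥0∞) ≤ μ.rnDeriv volume x →
      DensityZeroAt volume {y | μ.rnDeriv volume y < (q : ℝ).toNNReal} x := by
    refine ae_all_iff.2 fun q => hac.ae_le ?_
    filter_upwards [ae_densityZeroAt volume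
      (measurableSet_lt (Measure.measurable_rnDeriv μ volume) measurable_const)] with x hx hq
    exact hx hq.not_gt
  filter_upwards [hdens, Measure.rnDeriv_pos hac] with x hx hpos
  obtain ⟨q, -, hq0, hqx⟩ := ENNReal.lt_iff_exists_rat_btwn.1 hpos
  exact ⟨_, by exact_mod_cast hq0.ne', hx q hqx.le⟩

/-- `ApproxDerivAt f x A` is by definition
`∃ E, MeasurableSet E ∧ DensityOneAt E x ∧ HasTorusFDerivWithinAt f A E x`. -/
def HasTorusFDerivWithinAt (f : Torus d → Torus d)
    (A : EuclideanSpace ℝ (Fin d) →L[ℝ] EuclideanSpace ℝ (Fin d)) (s : Set (Torus d))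
    (x : Torus d) : Prop :=
  Tendsto (fun y => ‖vlift (f y - f x) - A (vlift (y - x))‖ / ‖vlift (y - x)‖)
    (𝓝[s \ {x}] x) (𝓝 0)

section deriv

variable {f : Torus d → Torus d} {A : EuclideanSpace ℝ (Fin d) →L[ℝ] EuclideanSpace ℝ (Fin d)}
  {s t : Set (Torus d)} {x : Torus d}

lemma HasTorusFDerivWithinAt.mono (h : HasTorusFDerivWithinAt f A t x) (hst : s ⊆ t) :
    HasTorusFDerivWithinAt f A s x :=
  h.mono_left (nhdsWithin_mono x (sdiff_subset_sdiff_left hst))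

lemma hasTorusFDerivWithinAt_inter (ht : t ∈ 𝓝 x) :
    HasTorusFDerivWithinAt f A (s ∩ t) x ↔ HasTorusFDerivWithinAt f A s x := by
  rw [HasTorusFDerivWithinAt, HasTorusFDerivWithinAt, nhdsWithin_restrict' (s \ {x}) ht,
    inter_sdiff_right_comm]

/-- Rademacher's theorem in the chart `y ↦ vlift (y - m)`; the smallness assumptions make the chart
and the lift of `f` additive on `s`. -/
lemma LipschitzOnWith.ae_exists_hasTorusFDerivWithinAt_of_small {K : ℝ≥0}
    (hf : LipschitzOnWith K f s) {m w : Torus d} (hm : ∀ y ∈ s, ‖y - m‖ < 1 / 4)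
    (hw : ∀ y ∈ s, ‖f y - w‖ < 1 / 4) :
    ∀ᵐ x, x ∈ s → ∃ A, HasTorusFDerivWithinAt f A s x := by
  set φ : Torus d → EuclideanSpace ℝ (Fin d) := fun y => vlift (y - m)
  set g : EuclideanSpace ℝ (Fin d) → EuclideanSpace ℝ (Fin d) :=
    fun v => vlift (f (m + toTorus v) - w)
  have hφ : ∀ x ∈ s, ∀ y ∈ s, φ y - φ x = vlift (y - x) := fun x hx y hy => by
    rw [← vlift_sub (hm y hy) (hm x hx), sub_sub_sub_cancel_right]
  have hg : ∀ x ∈ s, ∀ y ∈ s, g (φ y) - g (φ x) = vlift (f y - f x) := fun x hx y hy => by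
    simp only [g, φ, toTorus_vlift, add_sub_cancel]
    rw [← vlift_sub (hw y hy) (hw x hx), sub_sub_sub_cancel_right]
  have hlip : LipschitzOnWith (NNReal.sqrt d * K) g (φ '' s) := by
    refine LipschitzOnWith.of_dist_le_mul ?_
    rintro _ ⟨y, hy, rfl⟩ _ ⟨x, hx, rfl⟩
    rw [dist_eq_norm, dist_eq_norm, hg x hx y hy, hφ x hx y hy, NNReal.coe_mul, Real.coe_sqrt,
      NNReal.coe_natCast, mul_assoc]
    calc ‖vlift (f y - f x)‖ ≤ √d * ‖f y - f x‖ := norm_vlift_le _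
      _ ≤ √d * (K * ‖y - x‖) := by
        gcongr; simpa only [dist_eq_norm] using hf.dist_le_mul y hy x hx
      _ ≤ √d * (K * ‖vlift (y - x)‖) := by gcongr; exact norm_le_norm_vlift _
  have hφqmp : Measure.QuasiMeasurePreserving φ volume volume :=
    quasiMeasurePreserving_vlift.comp (measurePreserving_sub_right volume m).quasiMeasurePreserving
  filter_upwards [hφqmp.ae hlip.ae_differentiableWithinAt_of_mem] with x hdiff hx
  refine ⟨fderivWithin ℝ g (φ '' s) (φ x), ?_⟩
  have hquot := hasFDerivWithinAt_iff_tendsto.1 (hdiff (mem_image_of_mem φ hx)).hasFDerivWithinAt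
  have hφlim : Tendsto φ (𝓝[s \ {x}] x) (𝓝[φ '' s] (φ x)) := by
    refine tendsto_nhdsWithin_iff.2 ⟨tendsto_iff_norm_sub_tendsto_zero.2 ?_, ?_⟩
    · have hlim : Tendsto (fun y => √d * ‖y - x‖) (𝓝 x) (𝓝 0) := by
        simpa using ((tendsto_id.sub_const x).norm.const_mul √d : Tendsto _ (𝓝 x) _)
      refine squeeze_zero' (Eventually.of_forall fun _ => norm_nonneg _) ?_
        (hlim.mono_left nhdsWithin_le_nhds)
      filter_upwards [self_mem_nhdsWithin] with y hy
      rw [hφ x hx y hy.1]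
      exact norm_vlift_le _
    · filter_upwards [self_mem_nhdsWithin] with y hy
      exact mem_image_of_mem φ hy.1
  refine (hquot.comp hφlim).congr' ?_
  filter_upwards [self_mem_nhdsWithin] with y hy
  simp only [Function.comp_apply, hφ x hx y hy.1, hg x hx y hy.1, div_eq_inv_mul]

lemma LipschitzOnWith.ae_exists_hasTorusFDerivWithinAt {K : ℝ≥0} (hf : LipschitzOnWith K f s) :
    ∀ᵐ x, x ∈ s → ∃ A, HasTorusFDerivWithinAt f A s x := by
  set δ : ℝ := 1 / (8 * (K + 1))
  have hδ : 0 < δ := by positivity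
  have hKδ : ((K : ℝ) + 1) * (2 * δ) = 1 / 4 := by simp only [δ]; field_simp; norm_num
  obtain ⟨c, -, hc, hcover⟩ := finite_cover_balls_of_compact (isCompact_univ (X := Torus d)) hδ
  have hpiece : ∀ m ∈ c, ∀ᵐ x, x ∈ s ∩ ball m δ →
      ∃ A, HasTorusFDerivWithinAt f A (s ∩ ball m δ) x := by
    intro m _
    obtain hempty | ⟨a, has, ham⟩ := (s ∩ ball m δ).eq_empty_or_nonempty
    · simp [hempty]
    refine (hf.mono inter_subset_left).ae_exists_hasTorusFDerivWithinAt_of_small (m := m)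
      (w := f a) (fun y hy => ?_) fun y ⟨hys, hym⟩ => ?_
    · have : δ ≤ 1 / 8 := by
        rw [div_le_div_iff₀ (by positivity) (by norm_num)]; linarith [K.coe_nonneg]
      linarith [mem_ball_iff_norm.1 hy.2]
    · have hya : ‖y - a‖ < 2 * δ := by
        rw [← dist_eq_norm]
        linarith [dist_triangle_right y a m, mem_ball.1 hym, mem_ball.1 ham]
      calc ‖f y - f a‖ ≤ K * ‖y - a‖ := by
            simpa only [dist_eq_norm] using hf.dist_le_mul y hys a has
        _ ≤ (K + 1) * ‖y - a‖ := by gcongr; linarith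
        _ < (K + 1) * (2 * δ) := by gcongr
        _ = 1 / 4 := hKδ
  filter_upwards [(ae_ball_iff hc.countable).2 hpiece] with x hx hxs
  obtain ⟨m, hm, hxm⟩ := mem_iUnion₂.1 (hcover (mem_univ x))
  obtain ⟨A, hA⟩ := hx m hm ⟨hxs, hxm⟩
  exact ⟨A, (hasTorusFDerivWithinAt_inter (isOpen_ball.mem_nhds hxm)).1 hA⟩

theorem HasTorusFDerivWithinAt.comp {T S : Torus d → Torus d}
    {B : EuclideanSpace ℝ (Fin d) →L[ℝ] EuclideanSpace ℝ (Fin d)} {K : ℝ≥0} (hT : HasTorusFDerivWithinAt T A t (S x)) (hS : HasTorusFDerivWithinAt S B s x)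
    (hst : MapsTo S s t) (hSlip : LipschitzOnWith K S s) (hx : x ∈ s) :
    HasTorusFDerivWithinAt (T ∘ S) (A.comp B) s x := by
  set qT : Torus d → ℝ := fun z => ‖vlift (T z - T (S x)) - A (vlift (z - S x))‖ / ‖vlift (z - S x)‖
  set qS : Torus d → ℝ := fun y => ‖vlift (S y - S x) - B (vlift (y - x))‖ / ‖vlift (y - x)‖
  have hqT : Tendsto (qT ∘ S) (𝓝[s \ {x}] x) (𝓝 0) := by
    have hqT0 : qT (S x) = 0 := by simp [qT, vlift_zero]
    have hcont : ContinuousWithinAt qT t (S x) := by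
      rw [← continuousWithinAt_sdiff_self, ContinuousWithinAt, hqT0]
      exact hT
    have hSlim : Tendsto S (𝓝[s \ {x}] x) (𝓝[t] (S x)) := by
      refine tendsto_nhdsWithin_iff.2 ⟨?_, ?_⟩
      · exact ((hSlip.continuousOn x hx).mono sdiff_subset).tendsto
      · filter_upwards [self_mem_nhdsWithin] with y hy using hst hy.1
    simpa only [hqT0] using hcont.tendsto.comp hSlim
  have hbound : ∀ y ∈ s \ {x}, ‖vlift ((T ∘ S) y - (T ∘ S) x) - (A.comp B) (vlift (y - x))‖
      / ‖vlift (y - x)‖ ≤ qT (S y) * (√d * K) + ‖A‖ * qS y := by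
    rintro y ⟨hys, hyx⟩
    have hv : 0 < ‖vlift (y - x)‖ := norm_vlift_pos (sub_ne_zero.2 hyx)
    have hSv : ‖vlift (S y - S x)‖ ≤ √d * K * ‖vlift (y - x)‖ :=
      calc ‖vlift (S y - S x)‖ ≤ √d * ‖S y - S x‖ := norm_vlift_le _
        _ ≤ √d * (K * ‖y - x‖) := by
          gcongr; simpa only [dist_eq_norm] using hSlip.dist_le_mul y hys x hx
        _ ≤ √d * K * ‖vlift (y - x)‖ := by
          rw [mul_assoc]; gcongr; exact norm_le_norm_vlift _
    have hX : ‖vlift (T (S y) - T (S x)) - A (vlift (S y - S x))‖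
        = qT (S y) * ‖vlift (S y - S x)‖ := by
      by_cases h0 : S y = S x
      · simp [h0, vlift_zero]
      · exact (div_mul_cancel₀ _ (norm_vlift_pos (sub_ne_zero.2 h0)).ne').symm
    have hY : ‖vlift (S y - S x) - B (vlift (y - x))‖ = qS y * ‖vlift (y - x)‖ :=
      (div_mul_cancel₀ _ hv.ne').symm
    rw [div_le_iff₀ hv, Function.comp_apply, Function.comp_apply, ContinuousLinearMap.comp_apply]
    calc ‖vlift (T (S y) - T (S x)) - A (B (vlift (y - x)))‖
        = ‖(vlift (T (S y) - T (S x)) - A (vlift (S y - S x)))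
            + A (vlift (S y - S x) - B (vlift (y - x)))‖ := by
          rw [map_sub]; congr 1; abel
      _ ≤ qT (S y) * ‖vlift (S y - S x)‖ + ‖A‖ * (qS y * ‖vlift (y - x)‖) := by
          rw [← hX, ← hY]; exact norm_add_le_of_le le_rfl (A.le_opNorm _)
      _ ≤ qT (S y) * (√d * K * ‖vlift (y - x)‖) + ‖A‖ * (qS y * ‖vlift (y - x)‖) := by
          gcongr
      _ = (qT (S y) * (√d * K) + ‖A‖ * qS y) * ‖vlift (y - x)‖ := by ring
  refine squeeze_zero' (Eventually.of_forall fun _ => by positivity)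
    (eventually_nhdsWithin_of_forall hbound) ?_
  simpa using (hqT.mul_const (√d * K)).add (hS.const_mul ‖A‖)

end deriv

structure IsLipschitzPieceAt (μ : Measure (Torus d)) (f : Torus d → Torus d) (F : Set (Torus d))
    (A : EuclideanSpace ℝ (Fin d) →L[ℝ] EuclideanSpace ℝ (Fin d)) (x : Torus d) : Prop where
  measurableSet : MeasurableSet F
  mem : x ∈ F
  lipschitzOnWith : ∃ K, LipschitzOnWith K f F
  densityZeroAt_compl : DensityZeroAt volume Fᶜ x
  densityZeroAt_measure_compl : DensityZeroAt μ Fᶜ x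
  hasTorusFDerivWithinAt : HasTorusFDerivWithinAt f A F x

section pieces

variable {μ : Measure (Torus d)}

lemma IsLipschitzPieceAt.approxDerivAt {f : Torus d → Torus d} {F : Set (Torus d)}
    {A : EuclideanSpace ℝ (Fin d) →L[ℝ] EuclideanSpace ℝ (Fin d)} {x : Torus d}
    (h : IsLipschitzPieceAt μ f F A x) : ApproxDerivAt f x A :=
  ⟨F, h.measurableSet, densityOneAt_of_densityZeroAt_compl h.measurableSet h.densityZeroAt_compl,
    h.hasTorusFDerivWithinAt⟩

lemma ae_exists_isLipschitzPieceAt [IsFiniteMeasure μ] (hac : μ ≪ volume)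
    {f : Torus d → Torus d} {g : Torus d → ℝ} (hg : AEMeasurable g μ)
    (hf : ∀ x y, dist (f x) (f y) ≤ Real.exp (g x + g y) * dist x y) :
    ∀ᵐ x ∂μ, ∃ F A, IsLipschitzPieceAt μ f F A x := by
  obtain ⟨F, hFm, hFlip, hcover⟩ := exists_lipschitzOnWith_cover hg hf
  have hpiece : ∀ N, ∀ᵐ x ∂μ, x ∈ F N → ∃ A, IsLipschitzPieceAt μ f (F N) A x := fun N => by
    refine hac.ae_le ?_
    filter_upwards [ae_densityZeroAt volume (hFm N).compl, ae_densityZeroAt μ (hFm N).compl,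
      (hFlip N).ae_exists_hasTorusFDerivWithinAt] with x hvol hμ hderiv hx
    obtain ⟨A, hA⟩ := hderiv hx
    exact ⟨A, hFm N, hx, ⟨_, hFlip N⟩, hvol (not_not_intro hx), hμ (not_not_intro hx), hA⟩
  filter_upwards [ae_all_iff.2 hpiece, hcover] with x hx ⟨N, hN⟩
  obtain ⟨A, hA⟩ := hx N hN
  exact ⟨F N, A, hA⟩

theorem IsLipschitzPieceAt.approxDerivAt_comp {S T : Torus d → Torus d}
    (hS : MeasurePreserving S μ μ) {FS FT : Set (Torus d)}
    {A B : EuclideanSpace ℝ (Fin d) →L[ℝ] EuclideanSpace ℝ (Fin d)} {x : Torus d}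
    (hTx : IsLipschitzPieceAt μ T FT A (S x)) (hSx : IsLipschitzPieceAt μ S FS B x) {c : ℝ≥0}
    (hc : c ≠ 0) (hρ : DensityZeroAt volume {y | μ.rnDeriv volume y < c} x) :
    ApproxDerivAt (T ∘ S) x (A.comp B) := by
  obtain ⟨K, hK⟩ := hSx.lipschitzOnWith
  have hE : MeasurableSet (FS ∩ S ⁻¹' FT) :=
    hSx.measurableSet.inter (hTx.measurableSet.preimage hS.measurable)
  have hbad : DensityZeroAt volume (FS ∩ S ⁻¹' FTᶜ) x :=
    (hTx.densityZeroAt_measure_compl.inter_preimage hS hTx.measurableSet.compl hSx.mem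
      hK).of_measure hc hρ
  have hcompl : (FS ∩ S ⁻¹' FT)ᶜ ⊆ FSᶜ ∪ FS ∩ S ⁻¹' FTᶜ := fun y hy => by
    by_cases hyS : y ∈ FS
    · exact .inr ⟨hyS, fun hyT => hy ⟨hyS, hyT⟩⟩
    · exact .inl hyS
  refine ⟨FS ∩ S ⁻¹' FT, hE,
    densityOneAt_of_densityZeroAt_compl hE ((hSx.densityZeroAt_compl.union hbad).mono hcompl), ?_⟩
  exact hTx.hasTorusFDerivWithinAt.comp (hSx.hasTorusFDerivWithinAt.mono inter_subset_left)
    (fun y hy => hy.2) (hK.mono inter_subset_left) ⟨hSx.mem, hTx.mem⟩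

end pieces

end Torus

theorem approx_chain_rule_general (d : ℕ) (p : ℝ≥0∞)
    (μ : Measure (Torus d)) [IsProbabilityMeasure μ] (hac : μ ≪ volume)
    (T S : Torus d → Torus d)
    (hS : MeasurePreserving S μ μ)
    (gT gS : Torus d → ℝ) (hgT : MemLp gT p μ) (hgS : MemLp gS p μ)
    (hLipT : ∀ x y, dist (T x) (T y) ≤ Real.exp (gT x + gT y) * dist x y)
    (hLipS : ∀ x y, dist (S x) (S y) ≤ Real.exp (gS x + gS y) * dist x y) :
    ∀ᵐ x ∂μ, ∃ A B : EuclideanSpace ℝ (Fin d) →L[ℝ] EuclideanSpace ℝ (Fin d),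
      ApproxDerivAt T (S x) A ∧ ApproxDerivAt S x B ∧
      ApproxDerivAt (T ∘ S) x (A.comp B) := by
  filter_upwards [ae_exists_isLipschitzPieceAt hac hgS.1.aemeasurable hLipS,
    hS.quasiMeasurePreserving.ae (ae_exists_isLipschitzPieceAt hac hgT.1.aemeasurable hLipT),
    ae_exists_densityZeroAt_rnDeriv_lt hac] with x ⟨FS, B, hSx⟩ ⟨FT, A, hTx⟩ ⟨c, hc, hρ⟩
  exact ⟨A, B, hTx.approxDerivAt, hSx.approxDerivAt, hTx.approxDerivAt_comp hS hSx hc hρ⟩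

/-- chain rule for approximate differentials of two measure-preserving
Lusin–Lipschitz maps of the torus with common invariant measure `μ ≪ ℒ^d`. -/
theorem approx_chain_rule (d : ℕ) (p : ℝ≥0∞) (hp : 1 ≤ p)
    (μ : Measure (Torus d)) [IsProbabilityMeasure μ] (hac : μ ≪ volume)
    (T S : Torus d → Torus d)
    (hT : MeasurePreserving T μ μ) (hS : MeasurePreserving S μ μ)
    (gT gS : Torus d → ℝ) (hgT : MemLp gT p μ) (hgS : MemLp gS p μ)
    (hLipT : ∀ x y, dist (T x) (T y) ≤ Real.exp (gT x + gT y) * dist x y)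
    (hLipS : ∀ x y, dist (S x) (S y) ≤ Real.exp (gS x + gS y) * dist x y) :
    ∀ᵐ x ∂μ, ∃ A B : EuclideanSpace ℝ (Fin d) →L[ℝ] EuclideanSpace ℝ (Fin d),
      ApproxDerivAt T (S x) A ∧ ApproxDerivAt S x B ∧
      ApproxDerivAt (T ∘ S) x (A.comp B) :=
  approx_chain_rule_general d p μ hac T S hS gT gS hgT hgS hLipT hLipS
end
end

section
/- Let f ∈ L¹∩L^∞(𝕋^d) with ‖f‖_{L^∞} ≤ 1 and g ∈ L¹(𝕋^d) satisfy |f(x)−f(y)| ≤ e^{g(x)+g(y)} d(x,y) for all x,y ∈ 𝕋^d. Then ‖f‖²_{Ḣ_log} ≤ C(d)(‖g‖_{L¹(𝕋^d)} + ‖f‖_{L¹(𝕋^d)}), where ‖f‖²_{Ḣ_log} = ∫_{𝕋^d} ∫_{B_{1/5}(0)} |f(x+h)−f(x)|²/|h|^d dh dx. -/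
open MeasureTheory Filter
open scoped ENNReal

noncomputable section

/-- The squared homogeneous log-Sobolev seminorm
`‖f‖²_{Ḣ_log} = ∫_{𝕋^d} ∫_{B_{1/5}(0)} |f(x+h) - f(x)|²/|h|^d dh dx`. -/
def HlogSq {d : ℕ} (f : Torus d → ℝ) : ℝ≥0∞ :=
  ∫⁻ x, ∫⁻ h in Metric.ball (0 : Torus d) (1 / 5),
    ENNReal.ofReal (|f (x + h) - f x| ^ 2 / ‖h‖ ^ d)

/-!
Cut `B_{1/5}(0) \ {0}` into the dyadic annuli `r_{j+1} < |h| ≤ r_j`, `r_j = 2^{-j}/5`. On the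
`j`-th annulus, `|f| ≤ 1` and `e^{a+b} ≤ e^{2a} + e^{2b}` turn the Lusin–Lipschitz bound into
`|f(x+h) - f(x)|² ≤ (u_j(x) + u_j(x+h)) (|f(x)| + |f(x+h)|)` with `u_j = min(e^{2g} r_j, 2)`.
The weight `u_j` is at most `2` on the level set `P_j = {4g ≥ j}` and at most `(5/6)^j/5` off it
(as `e^{1/2} < 5/3`), so by translation invariance every cross term integrates to at most
`2 min(|P_j|, ‖f‖₁) + (5/6)^j ‖f‖₁/5`. The volume `≤ (2r_j)^d` of the annulus cancels
`|h|^{-d} < (2/r_j)^d`, and summing over `j` costs `‖f‖₁ + ∑_{j ≥ 1} |P_j| ≤ ‖f‖₁ + 4 ‖g⁺‖₁`.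
-/

open Real Set

theorem exp_add_le_exp_two_mul_add_exp_two_mul (a b : ℝ) :
    exp (a + b) ≤ exp (2 * a) + exp (2 * b) := by
  rcases le_total a b with h | h
  · exact (exp_le_exp.2 (by linarith)).trans (le_add_of_nonneg_left (exp_nonneg _))
  · exact (exp_le_exp.2 (by linarith)).trans (le_add_of_nonneg_right (exp_nonneg _))

theorem min_add_le_min_add_min {X Y c : ℝ} (hX : 0 ≤ X) (hY : 0 ≤ Y) (hc : 0 ≤ c) :
    min (X + Y) c ≤ min X c + min Y c := by
  simp only [min_def]
  split_ifs <;> linarith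

theorem sq_le_of_abs_le_exp_mul_of_abs_le_add {δ a b t r p q : ℝ} (ht : 0 ≤ t) (htr : t ≤ r)
    (hexp : |δ| ≤ exp (a + b) * t) (hpq : |δ| ≤ p + q) (hp : p ≤ 1) (hq : q ≤ 1) :
    δ ^ 2 ≤ (min (exp (2 * a) * r) 2 + min (exp (2 * b) * r) 2) * (p + q) := by
  have hr : 0 ≤ r := ht.trans htr
  have hδ : |δ| ≤ min (exp (2 * a) * r) 2 + min (exp (2 * b) * r) 2 := calc
    |δ| ≤ min (exp (2 * a) * r + exp (2 * b) * r) 2 := by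
      refine le_min (hexp.trans ?_) (by linarith)
      rw [← add_mul]
      exact mul_le_mul (exp_add_le_exp_two_mul_add_exp_two_mul a b) htr ht (by positivity)
    _ ≤ _ := min_add_le_min_add_min (by positivity) (by positivity) zero_le_two
  rw [← sq_abs, sq]
  exact mul_le_mul hδ hpq (abs_nonneg δ) (by positivity)

theorem sq_div_pow_le {δ a b t r p q : ℝ} (d : ℕ) (hrt : r / 2 < t) (htr : t ≤ r)
    (hexp : |δ| ≤ exp (a + b) * t) (hpq : |δ| ≤ p + q) (hp : p ≤ 1) (hq : q ≤ 1) :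
    δ ^ 2 / t ^ d ≤
      (2 / r) ^ d * ((min (exp (2 * a) * r) 2 + min (exp (2 * b) * r) 2) * (p + q)) := by
  have hr : 0 < r := by linarith
  have ht : 0 < t := by linarith
  have hinv : 1 / t ≤ 2 / r := by rw [div_le_div_iff₀ ht hr]; linarith
  rw [div_eq_mul_one_div, ← one_div_pow, mul_comm]
  exact mul_le_mul (by gcongr) (sq_le_of_abs_le_exp_mul_of_abs_le_add ht.le htr hexp hpq hp hq)
    (sq_nonneg δ) (by positivity)

theorem exp_half_le_five_div_three : exp (1 / 2) ≤ 5 / 3 := by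
  have h : exp (1 / 2) ^ 2 = exp 1 := by rw [← exp_nat_mul]; norm_num
  nlinarith [exp_one_lt_d9, exp_pos (1 / 2)]

theorem tsum_ite_natCast_succ_le_le_ofReal (t : ℝ) :
    ∑' k : ℕ, (if ((k + 1 : ℕ) : ℝ) ≤ t then 1 else 0 : ℝ≥0∞) ≤ ENNReal.ofReal t := by
  have hrange (k : ℕ) : ((k + 1 : ℕ) : ℝ) ≤ t ↔ k ∈ Finset.range ⌊t⌋₊ := by
    rw [Finset.mem_range, Nat.lt_iff_add_one_le, Nat.le_floor_iff' k.succ_ne_zero]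
  simp_rw [hrange]
  rw [tsum_eq_sum (s := Finset.range ⌊t⌋₊) (fun k hk => if_neg hk), Finset.sum_ite_mem,
    Finset.inter_self, Finset.sum_const, Finset.card_range, nsmul_one]
  rcases le_or_gt 0 t with ht | ht
  · exact (ENNReal.ofReal_natCast _).symm.trans_le (ENNReal.ofReal_le_ofReal (Nat.floor_le ht))
  · simp [Nat.floor_of_nonpos ht.le]

theorem tsum_ofReal_geometric_le_two : ∑' j : ℕ, ENNReal.ofReal ((5 / 6) ^ j / 5) ≤ 2 := by
  have hsum : Summable fun j : ℕ => ((5 / 6 : ℝ) ^ j / 5) :=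
    (summable_geometric_of_lt_one (by norm_num) (by norm_num)).div_const 5
  rw [← ENNReal.ofReal_tsum_of_nonneg (fun j => by positivity) hsum, tsum_div_const,
    tsum_geometric_of_lt_one (by norm_num) (by norm_num)]
  norm_num

section Measure

variable {α : Type*} [MeasurableSpace α] {μ : Measure α}

theorem tsum_measure_natCast_succ_le_le_lintegral {φ : α → ℝ} (hφ : Measurable φ) :
    ∑' k : ℕ, μ {x | ((k + 1 : ℕ) : ℝ) ≤ φ x} ≤ ∫⁻ x, ENNReal.ofReal (φ x) ∂μ := by
  have hmeas (k : ℕ) : MeasurableSet {x | ((k + 1 : ℕ) : ℝ) ≤ φ x} :=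
    measurableSet_le measurable_const hφ
  calc ∑' k : ℕ, μ {x | ((k + 1 : ℕ) : ℝ) ≤ φ x}
      = ∫⁻ x, ∑' k : ℕ, {x | ((k + 1 : ℕ) : ℝ) ≤ φ x}.indicator 1 x ∂μ := by
        rw [lintegral_tsum fun k => (measurable_one.indicator (hmeas k)).aemeasurable]
        simp_rw [lintegral_indicator_one (hmeas _)]
    _ ≤ ∫⁻ x, ENNReal.ofReal (φ x) ∂μ := by
        refine lintegral_mono fun x => ?_
        simp only [indicator_apply, mem_ofPred_eq, Pi.one_apply]
        exact tsum_ite_natCast_succ_le_le_ofReal (φ x)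

theorem lintegral_mul_le_of_le_of_le_compl {s : Set α} (hs : MeasurableSet s)
    {w ψ : α → ℝ≥0∞} {a ε : ℝ≥0∞} (ha : a ≠ ∞) (hε : ε ≠ ∞)
    (hw : ∀ x ∈ s, w x ≤ a) (hwc : ∀ x ∉ s, w x ≤ ε) (hψ : ∀ x, ψ x ≤ 1) :
    ∫⁻ x, w x * ψ x ∂μ ≤ a * min (μ s) (∫⁻ x, ψ x ∂μ) + ε * ∫⁻ x, ψ x ∂μ := by
  rw [← lintegral_add_compl _ hs]
  gcongr ?_ + ?_
  · calc ∫⁻ x in s, w x * ψ x ∂μ ≤ ∫⁻ x in s, a * ψ x ∂μ :=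
          setLIntegral_mono' hs fun x hx => mul_le_mul_left (hw x hx) _
      _ = a * ∫⁻ x in s, ψ x ∂μ := lintegral_const_mul' _ _ ha
      _ ≤ a * min (μ s) (∫⁻ x, ψ x ∂μ) := by
          gcongr
          refine le_min ?_ (setLIntegral_le_lintegral _ _)
          simpa using lintegral_mono (μ := μ.restrict s) hψ
  · calc ∫⁻ x in sᶜ, w x * ψ x ∂μ ≤ ∫⁻ x in sᶜ, ε * ψ x ∂μ :=
          setLIntegral_mono' hs.compl fun x hx => mul_le_mul_left (hwc x hx) _
      _ = ε * ∫⁻ x in sᶜ, ψ x ∂μ := lintegral_const_mul' _ _ hε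
      _ ≤ ε * ∫⁻ x, ψ x ∂μ := by gcongr; exact Measure.restrict_le_self

theorem ae_abs_le_one_of_eLpNorm_top_le_one {f : α → ℝ} (hf : eLpNorm f ⊤ μ ≤ 1) :
    ∀ᵐ x ∂μ, |f x| ≤ 1 := by
  filter_upwards [ae_le_eLpNormEssSup (f := f) (μ := μ)] with x hx
  rw [← eLpNorm_exponent_top] at hx
  have := hx.trans hf
  rwa [Real.enorm_eq_ofReal_abs, ENNReal.ofReal_le_one] at this

theorem exists_measurable_abs_le_one_ae_eq {f : α → ℝ} (hf : AEMeasurable f μ)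
    (hf1 : ∀ᵐ x ∂μ, |f x| ≤ 1) :
    ∃ F : α → ℝ, Measurable F ∧ (∀ x, |F x| ≤ 1) ∧ F =ᵐ[μ] f := by
  classical
  refine ⟨fun x => if |hf.mk f x| ≤ 1 then hf.mk f x else 0, ?_, fun x => ?_, ?_⟩
  · exact Measurable.ite (measurableSet_le hf.measurable_mk.abs measurable_const)
      hf.measurable_mk measurable_const
  · dsimp only
    split_ifs with h
    exacts [h, by simp]
  · filter_upwards [hf.ae_eq_mk, hf1] with x hx hx1
    simp [← hx, hx1]

theorem lintegral_ofReal_le_ofReal_integral_abs {g : α → ℝ} (hg : Integrable g μ) :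
    ∫⁻ x, ENNReal.ofReal (g x) ∂μ ≤ ENNReal.ofReal (∫ x, |g x| ∂μ) := by
  rw [ofReal_integral_eq_lintegral_ofReal hg.abs (ae_of_all _ fun x => abs_nonneg _)]
  exact lintegral_mono fun x => ENNReal.ofReal_le_ofReal (le_abs_self _)

end Measure

def dyadicRadius (j : ℕ) : ℝ := (1 / 2) ^ j / 5

theorem dyadicRadius_pos (j : ℕ) : 0 < dyadicRadius j := by unfold dyadicRadius; positivity

theorem dyadicRadius_succ (j : ℕ) : dyadicRadius (j + 1) = dyadicRadius j / 2 := by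
  unfold dyadicRadius; ring

section Weights

variable {α : Type*}

def levelSet (g : α → ℝ) (j : ℕ) : Set α := {x | (j : ℝ) ≤ 4 * g x}

def truncWeight (g : α → ℝ) (j : ℕ) (x : α) : ℝ := min (exp (2 * g x) * dyadicRadius j) 2

theorem truncWeight_nonneg (g : α → ℝ) (j : ℕ) (x : α) : 0 ≤ truncWeight g j x :=
  le_min (mul_nonneg (exp_nonneg _) (dyadicRadius_pos j).le) zero_le_two

theorem truncWeight_le_of_notMem_levelSet {g : α → ℝ} {j : ℕ} {x : α}
    (hx : x ∉ levelSet g j) : truncWeight g j x ≤ (5 / 6) ^ j / 5 := by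
  have hgx : 2 * g x ≤ j * (1 / 2) := by
    simp only [levelSet, mem_ofPred_eq, not_le] at hx; linarith
  have hexp : exp (2 * g x) ≤ (5 / 3) ^ j := calc
    exp (2 * g x) ≤ exp (1 / 2) ^ j := by rw [← exp_nat_mul]; exact exp_le_exp.2 hgx
    _ ≤ (5 / 3) ^ j := by gcongr; exact exp_half_le_five_div_three
  calc truncWeight g j x ≤ exp (2 * g x) * dyadicRadius j := min_le_left _ _
    _ ≤ (5 / 3) ^ j * dyadicRadius j := by gcongr; exact (dyadicRadius_pos j).le
    _ = (5 / 6) ^ j / 5 := by rw [dyadicRadius, ← mul_div_assoc, ← mul_pow]; norm_num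

variable [MeasurableSpace α] {μ : Measure α}

theorem measurableSet_levelSet {g : α → ℝ} (hg : Measurable g) (j : ℕ) :
    MeasurableSet (levelSet g j) :=
  measurableSet_le measurable_const (hg.const_mul 4)

theorem measurable_truncWeight {g : α → ℝ} (hg : Measurable g) (j : ℕ) :
    Measurable (truncWeight g j) := by
  unfold truncWeight; fun_prop

def weightBound (μ : Measure α) (g : α → ℝ) (Φ : ℝ≥0∞) (j : ℕ) : ℝ≥0∞ :=
  2 * min (μ (levelSet g j)) Φ + ENNReal.ofReal ((5 / 6) ^ j / 5) * Φ

theorem lintegral_truncWeight_mul_le {g : α → ℝ} (hg : Measurable g) (j : ℕ)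
    {ψ : α → ℝ≥0∞} (hψ : ∀ x, ψ x ≤ 1) :
    ∫⁻ x, ENNReal.ofReal (truncWeight g j x) * ψ x ∂μ ≤ weightBound μ g (∫⁻ x, ψ x ∂μ) j := by
  refine lintegral_mul_le_of_le_of_le_compl (measurableSet_levelSet hg j) ENNReal.ofNat_ne_top
    ENNReal.ofReal_ne_top (fun x _ => ?_) (fun x hx => ?_) hψ
  · exact (ENNReal.ofReal_le_ofReal (min_le_right _ _)).trans_eq (ENNReal.ofReal_ofNat 2)
  · exact ENNReal.ofReal_le_ofReal (truncWeight_le_of_notMem_levelSet hx)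

theorem tsum_weightBound_le {g : α → ℝ} (hg : Measurable g) (Φ : ℝ≥0∞) :
    ∑' j, weightBound μ g Φ j ≤ 8 * (∫⁻ x, ENNReal.ofReal (g x) ∂μ + Φ) := by
  set Λ := ∫⁻ x, ENNReal.ofReal (g x) ∂μ
  have hlevel : ∑' j, min (μ (levelSet g j)) Φ ≤ Φ + 4 * Λ := calc
    ∑' j, min (μ (levelSet g j)) Φ
        = min (μ (levelSet g 0)) Φ + ∑' k, min (μ (levelSet g (k + 1))) Φ :=
      tsum_eq_zero_add' ENNReal.summable
    _ ≤ Φ + ∑' k, μ (levelSet g (k + 1)) :=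
      add_le_add (min_le_right _ _) (ENNReal.tsum_le_tsum fun k => min_le_left _ _)
    _ ≤ Φ + ∫⁻ x, ENNReal.ofReal (4 * g x) ∂μ := by
      gcongr; exact tsum_measure_natCast_succ_le_le_lintegral (hg.const_mul 4)
    _ = Φ + 4 * Λ := by
      simp_rw [ENNReal.ofReal_mul zero_le_four, ENNReal.ofReal_ofNat]
      rw [lintegral_const_mul' _ _ ENNReal.ofNat_ne_top]
  calc ∑' j, weightBound μ g Φ j
      = 2 * ∑' j, min (μ (levelSet g j)) Φ + (∑' j, ENNReal.ofReal ((5 / 6) ^ j / 5)) * Φ := by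
        simp only [weightBound]
        rw [ENNReal.tsum_add, ENNReal.tsum_mul_left, ENNReal.tsum_mul_right]
    _ ≤ 2 * (Φ + 4 * Λ) + 2 * Φ := by gcongr; exact tsum_ofReal_geometric_le_two
    _ ≤ 8 * (Λ + Φ) := by
        ring_nf
        gcongr
        norm_num

end Weights

section Shift

variable {G : Type*} [AddGroup G] [MeasurableSpace G] [MeasurableAdd G] {μ : Measure G}
  [μ.IsAddRightInvariant]

theorem lintegral_add_shift_mul_add_shift_le {w ψ : G → ℝ≥0∞} (hw : Measurable w)
    (hψ : Measurable ψ) {R : ℝ≥0∞} (hR : ∀ c, ∫⁻ x, w x * ψ (x + c) ∂μ ≤ R) (h : G) :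
    ∫⁻ x, (w x + w (x + h)) * (ψ x + ψ (x + h)) ∂μ ≤ 4 * R := by
  have hshift (a b : G) : ∫⁻ x, w (x + a) * ψ (x + b) ∂μ ≤ R := by
    have := lintegral_add_right_eq_self (μ := μ) (fun x => w x * ψ (x + (-a + b))) a
    simp only [add_assoc, add_neg_cancel_left] at this
    exact this.trans_le (hR _)
  calc ∫⁻ x, (w x + w (x + h)) * (ψ x + ψ (x + h)) ∂μ
      = ∫⁻ x, w (x + 0) * ψ (x + 0) ∂μ + ∫⁻ x, w (x + 0) * ψ (x + h) ∂μ +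
          (∫⁻ x, w (x + h) * ψ (x + 0) ∂μ + ∫⁻ x, w (x + h) * ψ (x + h) ∂μ) := by
        simp_rw [add_zero, add_mul, mul_add]
        rw [lintegral_add_left (by fun_prop), lintegral_add_left (by fun_prop),
          lintegral_add_left (by fun_prop)]
    _ ≤ R + R + (R + R) := by gcongr <;> exact hshift _ _
    _ = 4 * R := by ring

end Shift

theorem ae_abs_sub_le_of_ae_eq {E : Type*} [SeminormedAddCommGroup E] [MeasurableSpace E]
    [MeasurableAdd E] {μ : Measure E} [μ.IsAddRightInvariant] {f F g G : E → ℝ}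
    (hF : F =ᵐ[μ] f) (hG : G =ᵐ[μ] g) (hlip : ∀ x y, |f x - f y| ≤ exp (g x + g y) * dist x y)
    (h : E) : ∀ᵐ x ∂μ, |F (x + h) - F x| ≤ exp (G x + G (x + h)) * ‖h‖ := by
  have hshift := (measurePreserving_add_right μ h).quasiMeasurePreserving
  filter_upwards [hF, hG, hshift.ae_eq_comp hF, hshift.ae_eq_comp hG] with x hFx hGx hFxh hGxh
  simp only [Function.comp_apply] at hFxh hGxh
  rw [hFx, hGx, hFxh, hGxh, add_comm (g x)]
  simpa using hlip (x + h) x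

namespace Torus

variable {d : ℕ}

theorem volume_closedBall_le (x : Torus d) {r : ℝ} (hr : 0 ≤ r) :
    volume (Metric.closedBall x r) ≤ ENNReal.ofReal ((2 * r) ^ d) := by
  rw [closedBall_pi _ hr, volume_pi_pi, ENNReal.ofReal_pow (by positivity), ← Fin.prod_const]
  gcongr with i
  rw [AddCircle.volume_closedBall]
  exact ENNReal.ofReal_le_ofReal (min_le_right _ _)

def annulus (d j : ℕ) : Set (Torus d) :=
  {h | dyadicRadius (j + 1) < ‖h‖ ∧ ‖h‖ ≤ dyadicRadius j}

theorem measurableSet_annulus (d j : ℕ) : MeasurableSet (annulus d j) :=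
  (measurableSet_lt measurable_const measurable_norm).inter
    (measurableSet_le measurable_norm measurable_const)

theorem volume_annulus_le (d j : ℕ) :
    volume (annulus d j) ≤ ENNReal.ofReal ((2 * dyadicRadius j) ^ d) :=
  (measure_mono fun _ hh => mem_closedBall_zero_iff.2 hh.2).trans
    (volume_closedBall_le 0 (dyadicRadius_pos j).le)

theorem ball_subset_insert_iUnion_annulus :
    Metric.ball (0 : Torus d) (1 / 5) ⊆ insert 0 (⋃ j, annulus d j) := by
  intro h hh
  rcases eq_or_ne h 0 with rfl | h0
  · exact mem_insert _ _
  refine mem_insert_of_mem _ (mem_iUnion.2 ?_)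
  have ht : 0 < 5 * ‖h‖ := by have := norm_pos_iff.2 h0; positivity
  have ht1 : 5 * ‖h‖ ≤ 1 := by rw [mem_ball_zero_iff] at hh; linarith
  obtain ⟨j, hj1, hj2⟩ :=
    exists_nat_pow_near_of_lt_one ht ht1 (by norm_num : (0 : ℝ) < 1 / 2) (by norm_num)
  exact ⟨j, by rw [dyadicRadius]; linarith, by rw [dyadicRadius]; linarith⟩

end Torus

section HlogSq

variable {d : ℕ}

open Torus

theorem HlogSq_congr_ae {f f' : Torus d → ℝ} (h : f =ᵐ[volume] f') : HlogSq f = HlogSq f' := by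
  refine lintegral_congr_ae ?_
  filter_upwards [h] with x hx
  refine lintegral_congr_ae (ae_restrict_of_ae ?_)
  filter_upwards [(measurePreserving_add_left volume x).quasiMeasurePreserving.ae_eq_comp h]
    with y hy
  simp only [Function.comp_apply] at hy
  rw [hx, hy]

theorem lintegral_sq_div_le_of_mem_annulus {f g : Torus d → ℝ} (hf : Measurable f)
    (hg : Measurable g) (hf1 : ∀ x, |f x| ≤ 1) {j : ℕ} {h : Torus d} (hh : h ∈ annulus d j)
    (hlip : ∀ᵐ x, |f (x + h) - f x| ≤ exp (g x + g (x + h)) * ‖h‖) :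
    ∫⁻ x, ENNReal.ofReal (|f (x + h) - f x| ^ 2 / ‖h‖ ^ d) ≤
      ENNReal.ofReal ((2 / dyadicRadius j) ^ d) *
        (4 * weightBound volume g (∫⁻ x, ENNReal.ofReal |f x|) j) := by
  set K := ENNReal.ofReal ((2 / dyadicRadius j) ^ d)
  set w := fun x => ENNReal.ofReal (truncWeight g j x)
  set ψ := fun x => ENNReal.ofReal |f x|
  have hpt : ∀ᵐ x, ENNReal.ofReal (|f (x + h) - f x| ^ 2 / ‖h‖ ^ d) ≤
      K * ((w x + w (x + h)) * (ψ x + ψ (x + h))) := by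
    filter_upwards [hlip] with x hx
    have hr := dyadicRadius_succ j ▸ hh.1
    have := sq_div_pow_le d hr hh.2 hx ((abs_sub_comm _ _).trans_le (abs_sub _ _))
      (hf1 x) (hf1 (x + h))
    rw [← sq_abs] at this
    simp only [K, w, ψ, ← ENNReal.ofReal_add (truncWeight_nonneg _ _ _)
      (truncWeight_nonneg _ _ _), ← ENNReal.ofReal_add (abs_nonneg _) (abs_nonneg _),
      ← ENNReal.ofReal_mul (add_nonneg (truncWeight_nonneg _ _ _) (truncWeight_nonneg _ _ _)),
      ← ENNReal.ofReal_mul (pow_nonneg (div_nonneg zero_le_two (dyadicRadius_pos j).le) d)]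
    exact ENNReal.ofReal_le_ofReal this
  calc ∫⁻ x, ENNReal.ofReal (|f (x + h) - f x| ^ 2 / ‖h‖ ^ d)
      ≤ ∫⁻ x, K * ((w x + w (x + h)) * (ψ x + ψ (x + h))) := lintegral_mono_ae hpt
    _ = K * ∫⁻ x, (w x + w (x + h)) * (ψ x + ψ (x + h)) :=
        lintegral_const_mul' _ _ ENNReal.ofReal_ne_top
    _ ≤ K * (4 * weightBound volume g (∫⁻ x, ψ x) j) := by
        gcongr
        refine lintegral_add_shift_mul_add_shift_le
          (measurable_truncWeight hg j).ennreal_ofReal (by fun_prop) (fun c => ?_) h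
        rw [← lintegral_add_right_eq_self ψ c]
        exact lintegral_truncWeight_mul_le hg j fun x => ENNReal.ofReal_le_one.2 (hf1 _)

theorem setLIntegral_annulus_le {f g : Torus d → ℝ} (hf : Measurable f)
    (hg : Measurable g) (hf1 : ∀ x, |f x| ≤ 1)
    (hlip : ∀ h, ∀ᵐ x, |f (x + h) - f x| ≤ exp (g x + g (x + h)) * ‖h‖) (j : ℕ) :
    ∫⁻ h in annulus d j, ∫⁻ x, ENNReal.ofReal (|f (x + h) - f x| ^ 2 / ‖h‖ ^ d) ≤
      4 ^ (d + 1) * weightBound volume g (∫⁻ x, ENNReal.ofReal |f x|) j := by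
  set W := weightBound volume g (∫⁻ x, ENNReal.ofReal |f x|) j
  have hr := dyadicRadius_pos j
  calc ∫⁻ h in annulus d j, ∫⁻ x, ENNReal.ofReal (|f (x + h) - f x| ^ 2 / ‖h‖ ^ d)
      ≤ ∫⁻ h in annulus d j, ENNReal.ofReal ((2 / dyadicRadius j) ^ d) * (4 * W) :=
        setLIntegral_mono' (measurableSet_annulus d j) fun h hh =>
          lintegral_sq_div_le_of_mem_annulus hf hg hf1 hh (hlip h)
    _ ≤ ENNReal.ofReal ((2 / dyadicRadius j) ^ d) * (4 * W) *
          ENNReal.ofReal ((2 * dyadicRadius j) ^ d) := by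
        rw [setLIntegral_const]; gcongr; exact volume_annulus_le d j
    _ = 4 ^ (d + 1) * W := by
        have h4 : 2 / dyadicRadius j * (2 * dyadicRadius j) = 4 := by field_simp; norm_num
        rw [mul_right_comm, ← ENNReal.ofReal_mul (by positivity), ← mul_pow, h4,
          ENNReal.ofReal_pow zero_le_four, ENNReal.ofReal_ofNat, pow_succ, mul_assoc]

theorem HlogSq_le_tsum_weightBound {f g : Torus d → ℝ} (hf : Measurable f)
    (hg : Measurable g) (hf1 : ∀ x, |f x| ≤ 1)
    (hlip : ∀ h, ∀ᵐ x, |f (x + h) - f x| ≤ exp (g x + g (x + h)) * ‖h‖) :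
    HlogSq f ≤ 4 ^ (d + 1) * ∑' j, weightBound volume g (∫⁻ x, ENNReal.ofReal |f x|) j := by
  set D := fun h => ∫⁻ x, ENNReal.ofReal (|f (x + h) - f x| ^ 2 / ‖h‖ ^ d)
  calc HlogSq f = ∫⁻ h in Metric.ball 0 (1 / 5), D h :=
        lintegral_lintegral_swap (by fun_prop)
    _ ≤ ∫⁻ h in insert 0 (⋃ j, annulus d j), D h :=
        lintegral_mono_set ball_subset_insert_iUnion_annulus
    _ ≤ (∫⁻ h in {0}, D h) + ∫⁻ h in ⋃ j, annulus d j, D h := by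
        rw [insert_eq]; exact lintegral_union_le D _ _
    _ ≤ ∑' j, ∫⁻ h in annulus d j, D h := by
        have hD0 : D 0 = 0 := by simp [D]
        rw [lintegral_singleton, hD0, zero_mul, zero_add]
        exact lintegral_iUnion_le _ _
    _ ≤ ∑' j, 4 ^ (d + 1) * weightBound volume g (∫⁻ x, ENNReal.ofReal |f x|) j :=
        ENNReal.tsum_le_tsum (setLIntegral_annulus_le hf hg hf1 hlip)
    _ = _ := ENNReal.tsum_mul_left

end HlogSq

/-- if `f ∈ L¹ ∩ L^∞(𝕋^d)` with `‖f‖_{L^∞} ≤ 1` and `g ∈ L¹(𝕋^d)`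
satisfy the Lusin–Lipschitz bound `|f(x) − f(y)| ≤ e^{g(x)+g(y)} d(x,y)`, then
`‖f‖²_{Ḣ_log} ≤ C(d) (‖g‖_{L¹} + ‖f‖_{L¹})`. -/
theorem hlog_bound_of_lusin_lipschitz (d : ℕ) :
    ∃ C : ℝ, 0 < C ∧ ∀ (f g : Torus d → ℝ),
      Integrable f (volume : Measure (Torus d)) →
      MemLp f ⊤ (volume : Measure (Torus d)) →
      eLpNorm f ⊤ (volume : Measure (Torus d)) ≤ 1 →
      Integrable g (volume : Measure (Torus d)) →
      (∀ x y, |f x - f y| ≤ Real.exp (g x + g y) * dist x y) →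
      HlogSq f ≤ ENNReal.ofReal
        (C * ((∫ x, |g x| ∂(volume : Measure (Torus d))) +
              (∫ x, |f x| ∂(volume : Measure (Torus d))))) := by
  refine ⟨8 * 4 ^ (d + 1), by positivity, fun f g hf _ hf1 hg hlip => ?_⟩
  obtain ⟨F, hFm, hF1, hFf⟩ :=
    exists_measurable_abs_le_one_ae_eq hf.aemeasurable (ae_abs_le_one_of_eLpNorm_top_le_one hf1)
  set G := hg.aemeasurable.mk g
  have hGg : G =ᵐ[volume] g := hg.aemeasurable.ae_eq_mk.symm
  have hΛ : ∫⁻ x, ENNReal.ofReal (G x) ≤ ENNReal.ofReal (∫ x, |g x|) :=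
    (lintegral_congr_ae (hGg.fun_comp ENNReal.ofReal)).trans_le
      (lintegral_ofReal_le_ofReal_integral_abs hg)
  have hΦ : ∫⁻ x, ENNReal.ofReal |F x| = ENNReal.ofReal (∫ x, |f x|) :=
    (lintegral_congr_ae (hFf.fun_comp fun t => ENNReal.ofReal |t|)).trans
      (ofReal_integral_eq_lintegral_ofReal hf.abs (ae_of_all _ fun _ => abs_nonneg _)).symm
  calc HlogSq f = HlogSq F := HlogSq_congr_ae hFf.symm
    _ ≤ 4 ^ (d + 1) * ∑' j, weightBound volume G (∫⁻ x, ENNReal.ofReal |F x|) j :=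
        HlogSq_le_tsum_weightBound hFm hg.aemeasurable.measurable_mk hF1
          (ae_abs_sub_le_of_ae_eq hFf hGg hlip)
    _ ≤ 4 ^ (d + 1) * (8 * ((∫⁻ x, ENNReal.ofReal (G x)) + ∫⁻ x, ENNReal.ofReal |F x|)) := by
        gcongr; exact tsum_weightBound_le hg.aemeasurable.measurable_mk _
    _ ≤ 4 ^ (d + 1) * (8 * (ENNReal.ofReal (∫ x, |g x|) + ENNReal.ofReal (∫ x, |f x|))) := by
        rw [hΦ]; gcongr
    _ = _ := by
        rw [ENNReal.ofReal_mul (by positivity), ← ENNReal.ofReal_add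
          (integral_nonneg fun _ => abs_nonneg _) (integral_nonneg fun _ => abs_nonneg _),
          ENNReal.ofReal_mul (by norm_num), ENNReal.ofReal_pow zero_le_four]
        simp only [ENNReal.ofReal_ofNat]
        ring
end
end
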